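/- arXiv:1108.1066 — 2 statements merged into one kernel-verified Lean document; each statement's English description precedes it below -/
import Mathlib

section
/- Let K, L be n×n real matrices with I the n×n identity. For i = 0,…,r let eᵢ : ℝ → ℝⁿ be differentiable and Fᵢ : ℝ → Matrix (Fin n) (Fin m) ℝ be a function of time, and let Δ : ℝ → ℝᵐ be differentiable. Suppose for all t: ėᵢ(t) = −K·eᵢ(t) + Fᵢ(t)·Δ(t) for every i, and Δ̇(t) = −Σ_{i=0}^{r} Fᵢ(t)ᵀ·[(L·K + I)·eᵢ(t) + L·ėᵢ(t)]. Then V(t) = ½ Σ_{i=0}^{r} ‖eᵢ(t)‖² + ½‖Δ(t)‖² is differentiable with V̇(t) = −Σ_{i=0}^{r} ⟨eᵢ(t), K·eᵢ(t)⟩ − ⟨Δ(t), G*(t)·Δ(t)⟩, where G*(t) = Σ_{i=0}^{r} Fᵢ(t)ᵀ·Lᵀ·Fᵢ(t). -/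
open Matrix
open scoped InnerProductSpace

/-!
Along solutions, `V̇ = Σᵢ ⟪eᵢ, ėᵢ⟫ + ⟪Δ, Δ̇⟫`. Substituting `ėᵢ = -K eᵢ + Fᵢ Δ` turns the adaptation
input `(LK + I) eᵢ + L ėᵢ` into `eᵢ + L Fᵢ Δ`, so each mode contributes
`-⟪eᵢ, K eᵢ⟫ + ⟪eᵢ, Fᵢ Δ⟫ - ⟪Fᵢ Δ, eᵢ⟫ - ⟪Fᵢ Δ, L Fᵢ Δ⟫`: the cross terms cancel and the last
term is `⟪Δ, Fᵢᵀ Lᵀ Fᵢ Δ⟫`.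
-/

theorem HasDerivAt.half_norm_sq {E : Type*} [NormedAddCommGroup E] [InnerProductSpace ℝ E]
    {f : ℝ → E} {f' : E} {t : ℝ} (hf : HasDerivAt f f' t) :
    HasDerivAt (fun s => (1 / 2 : ℝ) * ‖f s‖ ^ 2) ⟪f t, f'⟫_ℝ t := by
  simpa using hf.norm_sq.const_mul (1 / 2 : ℝ)

theorem EuclideanSpace.real_inner_eq_dotProduct {ι : Type*} [Fintype ι]
    (x y : EuclideanSpace ℝ ι) : ⟪x, y⟫_ℝ = x.ofLp ⬝ᵥ y.ofLp := by
  rw [EuclideanSpace.inner_eq_star_dotProduct, star_trivial, dotProduct_comm]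

section ErrorDynamics

variable {R : Type*} [CommRing R] {n m : Type*} [Fintype n] [Fintype m]

theorem mulVec_adaptationInput_eq [DecidableEq n] (K L : Matrix n n R) (F : Matrix n m R)
    (e : n → R) (Δ : m → R) :
    (L * K + 1) *ᵥ e + L *ᵥ (-(K *ᵥ e) + F *ᵥ Δ) = e + L *ᵥ F *ᵥ Δ := by
  simp only [add_mulVec, mulVec_add, mulVec_neg, one_mulVec, mulVec_mulVec]
  abel

theorem dotProduct_transpose_mul_transpose_mul_mulVec (L : Matrix n n R) (F : Matrix n m R)
    (x : m → R) : x ⬝ᵥ (Fᵀ * Lᵀ * F) *ᵥ x = F *ᵥ x ⬝ᵥ L *ᵥ F *ᵥ x := by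
  rw [← mulVec_mulVec, ← mulVec_mulVec, dotProduct_mulVec, vecMul_transpose,
    dotProduct_mulVec, vecMul_transpose, dotProduct_comm]

theorem dotProduct_errorDynamics_sub_dotProduct_adaptation [DecidableEq n]
    (K L : Matrix n n R) (F : Matrix n m R) (e : n → R) (Δ : m → R) :
    e ⬝ᵥ (-(K *ᵥ e) + F *ᵥ Δ) - Δ ⬝ᵥ Fᵀ *ᵥ ((L * K + 1) *ᵥ e + L *ᵥ (-(K *ᵥ e) + F *ᵥ Δ)) =
      -(e ⬝ᵥ K *ᵥ e) - Δ ⬝ᵥ (Fᵀ * Lᵀ * F) *ᵥ Δ := by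
  rw [mulVec_adaptationInput_eq, dotProduct_transpose_mul_transpose_mul_mulVec,
    dotProduct_mulVec, vecMul_transpose, dotProduct_add, dotProduct_add, dotProduct_neg,
    dotProduct_comm e (F *ᵥ Δ)]
  ring

theorem sum_dotProduct_errorDynamics_add_dotProduct_adaptation [DecidableEq n] {ι : Type*}
    [Fintype ι] (K L : Matrix n n R) (F : ι → Matrix n m R) (e : ι → n → R) (Δ : m → R) :
    ∑ i, e i ⬝ᵥ (-(K *ᵥ e i) + F i *ᵥ Δ) +
        Δ ⬝ᵥ -(∑ i, (F i)ᵀ *ᵥ ((L * K + 1) *ᵥ e i + L *ᵥ (-(K *ᵥ e i) + F i *ᵥ Δ))) =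
      -(∑ i, e i ⬝ᵥ K *ᵥ e i) - Δ ⬝ᵥ (∑ i, (F i)ᵀ * Lᵀ * F i) *ᵥ Δ := by
  rw [dotProduct_neg, dotProduct_sum, sum_mulVec, dotProduct_sum, ← sub_eq_add_neg,
    ← Finset.sum_sub_distrib, ← Finset.sum_neg_distrib, ← Finset.sum_sub_distrib]
  exact Finset.sum_congr rfl fun i _ =>
    dotProduct_errorDynamics_sub_dotProduct_adaptation K L (F i) (e i) Δ

end ErrorDynamics

/-- Under the augmented error dynamics `ėᵢ = -K eᵢ + Fᵢ(t) Δ` and the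
augmented adaptation law `Δ̇ = -Σᵢ Fᵢ(t)ᵀ[(LK + I) eᵢ + L ėᵢ]`, the Lyapunov function
`V(t) = ½ Σᵢ ‖eᵢ(t)‖² + ½‖Δ(t)‖²` is differentiable with
`V̇(t) = -Σᵢ ⟪eᵢ, K eᵢ⟫ - ⟪Δ, G*(t) Δ⟫`, where `G*(t) = Σᵢ Fᵢ(t)ᵀ Lᵀ Fᵢ(t)`. -/
theorem augmented_lyapunov_derivative {n m r : ℕ}
    (K L : Matrix (Fin n) (Fin n) ℝ)
    (F : Fin (r + 1) → ℝ → Matrix (Fin n) (Fin m) ℝ)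
    (e e' : Fin (r + 1) → ℝ → EuclideanSpace ℝ (Fin n))
    (Δ Δ' : ℝ → EuclideanSpace ℝ (Fin m))
    (he : ∀ i t, HasDerivAt (e i) (e' i t) t)
    (hΔ : ∀ t, HasDerivAt Δ (Δ' t) t)
    (hode : ∀ i t, e' i t = -(K.mulVec (e i t)) + (F i t).mulVec (Δ t))
    (hadapt : ∀ t, Δ' t =
      -(∑ i : Fin (r + 1),
        (F i t)ᵀ.mulVec ((L * K + 1).mulVec (e i t) + L.mulVec (e' i t)))) :
    ∀ t, HasDerivAt
      (fun s => (1 / 2 : ℝ) * ∑ i : Fin (r + 1), ‖e i s‖ ^ 2 +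
        (1 / 2 : ℝ) * ‖Δ s‖ ^ 2)
      (-(∑ i : Fin (r + 1), ⟪e i t, WithLp.toLp 2 (K.mulVec (e i t))⟫_ℝ) -
        ⟪Δ t, WithLp.toLp 2 ((∑ i : Fin (r + 1), (F i t)ᵀ * Lᵀ * F i t).mulVec (Δ t))⟫_ℝ) t := by
  intro t
  have hV : HasDerivAt
      (fun s => (1 / 2 : ℝ) * ∑ i : Fin (r + 1), ‖e i s‖ ^ 2 + (1 / 2 : ℝ) * ‖Δ s‖ ^ 2)
      (∑ i, ⟪e i t, e' i t⟫_ℝ + ⟪Δ t, Δ' t⟫_ℝ) t := by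
    simp only [Finset.mul_sum]
    exact (HasDerivAt.fun_sum fun i _ => (he i t).half_norm_sq).add (hΔ t).half_norm_sq
  convert hV using 1
  simp only [EuclideanSpace.real_inner_eq_dotProduct, hadapt, hode]
  exact (sum_dotProduct_errorDynamics_add_dotProduct_adaptation K L (fun i => F i t)
    (fun i => e i t) (Δ t)).symm
end

section
/- Let K, L be n×n real matrices with I the n×n identity. For i = 0,…,r let eᵢ : ℝ → ℝⁿ be differentiable and Fᵢ : ℝ → Matrix (Fin n) (Fin m) ℝ, and let Δ : ℝ → ℝᵐ be differentiable, satisfying for all t ≥ 0: ėᵢ(t) = −K·eᵢ(t) + Fᵢ(t)·Δ(t) for every i, and Δ̇(t) = −Σ_{i=0}^{r} Fᵢ(t)ᵀ·[(L·K + I)·eᵢ(t) + L·ėᵢ(t)]. Assume there exist k > 0 and μ > 0 with ⟨v, K·v⟩ ≥ k‖v‖² for all v ∈ ℝⁿ and ⟨w, (Σ_{i=0}^{r} Fᵢ(t)ᵀ·Lᵀ·Fᵢ(t))·w⟩ ≥ μ‖w‖² for all w ∈ ℝᵐ and t ≥ 0. Then, with c = min(k, μ), Σ_{i=0}^{r}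 ‖eᵢ(t)‖² + ‖Δ(t)‖² ≤ (Σ_{i=0}^{r} ‖eᵢ(0)‖² + ‖Δ(0)‖²)·exp(−2ct) for all t ≥ 0; in particular every eᵢ(t) → 0 and Δ(t) → 0 as t → ∞. -/
/-!
The energy `V = Σᵢ ‖eᵢ‖² + ‖Δ‖²` is a Lyapunov function. Along the error dynamics the cross
terms `⟪eᵢ, Fᵢ Δ⟫` produced by `ėᵢ` are cancelled exactly by those produced by the adaptation
law, leaving `V̇ = -2 Σᵢ ⟪eᵢ, K eᵢ⟫ - 2 ⟪Δ, (Σᵢ Fᵢᵀ Lᵀ Fᵢ) Δ⟫ ≤ -2 min(k, μ) V`.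
Grönwall's inequality gives exponential decay of `V`, hence of every `eᵢ` and of `Δ`.
-/

open Matrix Filter Finset Real
open scoped InnerProductSpace Topology

theorem le_mul_exp_of_hasDerivAt_le_mul {V V' : ℝ → ℝ} {K : ℝ}
    (hV : ∀ t, 0 ≤ t → HasDerivAt V (V' t) t) (hle : ∀ t, 0 ≤ t → V' t ≤ K * V t)
    {t : ℝ} (ht : 0 ≤ t) : V t ≤ V 0 * exp (K * t) := by
  have hcont : ContinuousOn V (Set.Icc 0 t) := fun s hs =>
    (hV s hs.1).continuousAt.continuousWithinAt
  have h := le_gronwallBound_of_liminf_deriv_right_le (ε := 0) hcont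
    (fun s hs _ hr => by
      simpa only [slope_def_module, smul_eq_mul] using
        (hV s hs.1).hasDerivWithinAt.liminf_right_slope_le hr)
    le_rfl (fun s hs => by simpa using hle s hs.1) t ⟨ht, le_rfl⟩
  simpa only [sub_zero, gronwallBound_ε0] using h

theorem tendsto_zero_of_norm_sq_le_mul_exp {E : Type*} [NormedAddCommGroup E] {f : ℝ → E}
    {C a : ℝ} (ha : a < 0) (hf : ∀ t, 0 ≤ t → ‖f t‖ ^ 2 ≤ C * exp (a * t)) :
    Tendsto f atTop (𝓝 0) := by
  have hexp : Tendsto (fun t => C * exp (a * t)) atTop (𝓝 0) := by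
    simpa using (tendsto_exp_atBot.comp (tendsto_id.const_mul_atTop_of_neg ha)).const_mul C
  have hsq : Tendsto (fun t => ‖f t‖ ^ 2) atTop (𝓝 0) :=
    squeeze_zero' (Eventually.of_forall fun t => sq_nonneg _)
      (eventually_atTop.mpr ⟨0, hf⟩) hexp
  rw [tendsto_zero_iff_norm_tendsto_zero]
  simpa [sqrt_sq (norm_nonneg _)] using hsq.sqrt

section AugmentedScheme

variable {R ι p q : Type*} [Fintype ι] [Fintype p] [Fintype q]

theorem transpose_mulVec_dotProduct [CommRing R] (A : Matrix p q R) (x : p → R) (y : q → R) :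
    (Aᵀ *ᵥ x) ⬝ᵥ y = x ⬝ᵥ (A *ᵥ y) := by
  rw [mulVec_transpose, dotProduct_mulVec]

theorem augmented_energy_rate_eq [DecidableEq p] [CommRing R] (K L : Matrix p p R)
    (F : ι → Matrix p q R) (e e' : ι → p → R) (Δ : q → R) (hode : ∀ i, e' i = -(K *ᵥ e i) + F i *ᵥ Δ) :
    ∑ i, e' i ⬝ᵥ e i + (-∑ i, (F i)ᵀ *ᵥ ((L * K + 1) *ᵥ e i + L *ᵥ e' i)) ⬝ᵥ Δ =
      -∑ i, (K *ᵥ e i) ⬝ᵥ e i - ((∑ i, (F i)ᵀ * Lᵀ * F i) *ᵥ Δ) ⬝ᵥ Δ := by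
  have hsummand : ∀ i, e' i ⬝ᵥ e i - ((F i)ᵀ *ᵥ ((L * K + 1) *ᵥ e i + L *ᵥ e' i)) ⬝ᵥ Δ =
      -((K *ᵥ e i) ⬝ᵥ e i) - ((F i)ᵀ * Lᵀ * F i) *ᵥ Δ ⬝ᵥ Δ := by
    intro i
    have hx : (L * K + 1) *ᵥ e i + L *ᵥ e' i = e i + L *ᵥ (F i *ᵥ Δ) := by
      rw [hode, add_mulVec, one_mulVec, ← mulVec_mulVec, mulVec_add, mulVec_neg]
      abel
    rw [hx, transpose_mulVec_dotProduct, ← mulVec_mulVec, ← mulVec_mulVec,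
      transpose_mulVec_dotProduct, transpose_mulVec_dotProduct, hode, add_dotProduct,
      neg_dotProduct, add_dotProduct, dotProduct_comm (e i), dotProduct_comm (L *ᵥ _)]
    ring
  rw [neg_dotProduct, sum_dotProduct, ← sub_eq_add_neg, ← sum_sub_distrib, sum_congr rfl
    fun i _ => hsummand i, sum_mulVec, sum_dotProduct, sum_sub_distrib, sum_neg_distrib]

theorem augmented_energy_rate_le [DecidableEq p] (K L : Matrix p p ℝ) (F : ι → Matrix p q ℝ)
    (e e' : ι → EuclideanSpace ℝ p) (Δ Δ' : EuclideanSpace ℝ q)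
    (hode : ∀ i, e' i = -(K.mulVec (e i)) + (F i).mulVec Δ)
    (hadapt : Δ' = -(∑ i, (F i)ᵀ.mulVec ((L * K + 1).mulVec (e i) + L.mulVec (e' i))))
    {k μ : ℝ} (hK : ∀ v : EuclideanSpace ℝ p, k * ‖v‖ ^ 2 ≤ ⟪v, WithLp.toLp 2 (K.mulVec v)⟫_ℝ)
    (hG : ∀ w : EuclideanSpace ℝ q,
      μ * ‖w‖ ^ 2 ≤ ⟪w, WithLp.toLp 2 ((∑ i, (F i)ᵀ * Lᵀ * F i).mulVec w)⟫_ℝ) :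
    ∑ i, ⟪e i, e' i⟫_ℝ + ⟪Δ, Δ'⟫_ℝ ≤ -min k μ * (∑ i, ‖e i‖ ^ 2 + ‖Δ‖ ^ 2) := by
  have hrate := augmented_energy_rate_eq K L F (fun i => e i) (fun i => e' i) Δ hode
  simp only [EuclideanSpace.inner_eq_star_dotProduct, star_trivial] at hK hG ⊢
  rw [hadapt, hrate]
  have hKsum : k * ∑ i, ‖e i‖ ^ 2 ≤ ∑ i, (K *ᵥ e i) ⬝ᵥ e i := by
    rw [mul_sum]
    exact sum_le_sum fun i _ => hK (e i)
  have he : 0 ≤ ∑ i, ‖e i‖ ^ 2 := sum_nonneg fun i _ => sq_nonneg _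
  have hke := mul_le_mul_of_nonneg_right (min_le_left k μ) he
  have hμΔ := mul_le_mul_of_nonneg_right (min_le_right k μ) (sq_nonneg ‖Δ‖)
  linarith [hG Δ]

end AugmentedScheme

/-- Corollary 1: Under the augmented error dynamics
`ėᵢ = -K eᵢ + Fᵢ(t) Δ` and the augmented adaptation law
`Δ̇ = -Σᵢ Fᵢ(t)ᵀ[(LK + I) eᵢ + L ėᵢ]` for `t ≥ 0`, if `⟪v, K v⟫ ≥ k‖v‖²` and
`⟪w, (Σᵢ Fᵢ(t)ᵀ Lᵀ Fᵢ(t)) w⟫ ≥ μ‖w‖²` uniformly with `k, μ > 0`, then with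
`c = min k μ`, `Σᵢ ‖eᵢ(t)‖² + ‖Δ(t)‖² ≤ (Σᵢ ‖eᵢ(0)‖² + ‖Δ(0)‖²) exp(-2ct)` for all
`t ≥ 0`; in particular every `eᵢ(t) → 0` and `Δ(t) → 0` as `t → ∞`. -/
theorem augmented_convergence {n m r : ℕ}
    (K L : Matrix (Fin n) (Fin n) ℝ)
    (F : Fin (r + 1) → ℝ → Matrix (Fin n) (Fin m) ℝ)
    (e e' : Fin (r + 1) → ℝ → EuclideanSpace ℝ (Fin n))
    (Δ Δ' : ℝ → EuclideanSpace ℝ (Fin m))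
    (he : ∀ i t, HasDerivAt (e i) (e' i t) t)
    (hΔ : ∀ t, HasDerivAt Δ (Δ' t) t)
    (hode : ∀ i t, 0 ≤ t → e' i t = -(K.mulVec (e i t)) + (F i t).mulVec (Δ t))
    (hadapt : ∀ t, 0 ≤ t → Δ' t =
      -(∑ i : Fin (r + 1),
        (F i t)ᵀ.mulVec ((L * K + 1).mulVec (e i t) + L.mulVec (e' i t))))
    (k μ : ℝ) (hk : 0 < k) (hμ : 0 < μ)
    (hK : ∀ v : EuclideanSpace ℝ (Fin n), k * ‖v‖ ^ 2 ≤ ⟪v, WithLp.toLp 2 (K.mulVec v)⟫_ℝ)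
    (hG : ∀ t, 0 ≤ t → ∀ w : EuclideanSpace ℝ (Fin m),
      μ * ‖w‖ ^ 2 ≤ ⟪w, WithLp.toLp 2 ((∑ i : Fin (r + 1), (F i t)ᵀ * Lᵀ * F i t).mulVec w)⟫_ℝ) :
    (∀ t, 0 ≤ t →
      (∑ i : Fin (r + 1), ‖e i t‖ ^ 2) + ‖Δ t‖ ^ 2 ≤
        ((∑ i : Fin (r + 1), ‖e i 0‖ ^ 2) + ‖Δ 0‖ ^ 2) *
          Real.exp (-2 * min k μ * t)) ∧
    (∀ i, Tendsto (e i) atTop (nhds 0)) ∧ Tendsto Δ atTop (nhds 0) := by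
  set V := fun t => (∑ i, ‖e i t‖ ^ 2) + ‖Δ t‖ ^ 2
  have hV : ∀ t, HasDerivAt V (∑ i, 2 * ⟪e i t, e' i t⟫_ℝ + 2 * ⟪Δ t, Δ' t⟫_ℝ) t := fun t =>
    (HasDerivAt.fun_sum fun i _ => (he i t).norm_sq).add (hΔ t).norm_sq
  have hbound : ∀ t, 0 ≤ t → V t ≤ V 0 * exp (-2 * min k μ * t) := by
    refine fun t ht => le_mul_exp_of_hasDerivAt_le_mul (fun t _ => hV t) (fun t ht => ?_) ht
    have hrate := augmented_energy_rate_le K L (F · t) (e · t) (e' · t) (Δ t) (Δ' t)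
      (fun i => hode i t ht) (hadapt t ht) hK (hG t ht)
    rw [← mul_sum]
    linarith
  have hc : -2 * min k μ < 0 := mul_neg_of_neg_of_pos (by norm_num) (lt_min hk hμ)
  refine ⟨hbound, fun i => ?_, ?_⟩
  · refine tendsto_zero_of_norm_sq_le_mul_exp hc fun t ht => le_trans ?_ (hbound t ht)
    exact le_add_of_le_of_nonneg (single_le_sum (fun j _ => sq_nonneg ‖e j t‖) (mem_univ i))
      (sq_nonneg _)
  · refine tendsto_zero_of_norm_sq_le_mul_exp hc fun t ht => le_trans ?_ (hbound t ht)
    exact le_add_of_nonneg_left (sum_nonneg fun i _ => sq_nonneg _)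
end
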